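/- arXiv:1802.05531 — 2 statements merged into one kernel-verified Lean document; each statement's English description precedes it below -/
import Mathlib

section
/- If an invertible linear map L on M_n(ℝ) maps the set S of Schur stable matrices onto itself (L(S) = S), then ρ(L(A)) = ρ(A) for every A ∈ M_n(ℝ). -/
open Polynomial Matrix NNReal

noncomputable def eigs {n : ℕ} (A : Matrix (Fin n) (Fin n) ℝ) : Multiset ℂ :=
  (A.charpoly.map (algebraMap ℝ ℂ)).roots

def SchurStable {n : ℕ} (A : Matrix (Fin n) (Fin n) ℝ) : Prop :=
  ∀ z ∈ eigs A, ‖z‖ < 1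

noncomputable def specRad {n : ℕ} (A : Matrix (Fin n) (Fin n) ℝ) : ℝ≥0 :=
  ((eigs A).map fun z => ‖z‖₊).sup

noncomputable def specRadL {n : ℕ}
    (L : Matrix (Fin n) (Fin n) ℝ →ₗ[ℝ] Matrix (Fin n) (Fin n) ℝ) : ℝ≥0 :=
  ((L.charpoly.map (algebraMap ℝ ℂ)).roots.map fun z => ‖z‖₊).sup

noncomputable def opNorm {n : ℕ} (A : Matrix (Fin n) (Fin n) ℝ) : ℝ :=
  ‖Matrix.toEuclideanCLM (𝕜 := ℝ) A‖

lemma eval_charpoly' {m : ℕ} (B : Matrix (Fin m) (Fin m) ℂ) (z : ℂ) :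
    B.charpoly.eval z = (z • (1 : Matrix (Fin m) (Fin m) ℂ) - B).det := by
  rw [Matrix.charpoly, ← coe_evalRingHom, RingHom.map_det]
  congr 1
  ext i j
  by_cases h : i = j
  · subst h
    simp [charmatrix_apply_eq]
  · simp [charmatrix_apply_ne _ _ _ h, Matrix.one_apply_ne h]

lemma map_smul_alg {m : ℕ} (c : ℝ) (A : Matrix (Fin m) (Fin m) ℝ) :
    (c • A).map (algebraMap ℝ ℂ) = (c : ℂ) • A.map (algebraMap ℝ ℂ) := by
  ext i j
  simp [Matrix.map_apply]

lemma eigs_eq {m : ℕ} (A : Matrix (Fin m) (Fin m) ℝ) :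
    eigs A = (A.map (algebraMap ℝ ℂ)).charpoly.roots := by
  rw [eigs, Matrix.charpoly_map]

lemma mem_eigs_smul {m : ℕ} {c : ℝ} (hc : c ≠ 0) {A : Matrix (Fin m) (Fin m) ℝ} {z : ℂ}
    (hz : z ∈ eigs A) : (c : ℂ) * z ∈ eigs (c • A) := by
  rw [eigs_eq] at hz ⊢
  rw [map_smul_alg]
  set B := A.map (algebraMap ℝ ℂ)
  rw [mem_roots'] at hz ⊢
  refine ⟨(Matrix.charpoly_monic _).ne_zero, ?_⟩
  have h2 := hz.2
  rw [IsRoot, eval_charpoly'] at h2 ⊢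
  rw [mul_smul, ← smul_sub, Matrix.det_smul, h2, mul_zero]

lemma nnnorm_le_specRad {m : ℕ} {A : Matrix (Fin m) (Fin m) ℝ} {z : ℂ} (hz : z ∈ eigs A) :
    ‖z‖₊ ≤ specRad A :=
  Multiset.le_sup (Multiset.mem_map_of_mem _ hz)

lemma specRad_le_iff {m : ℕ} {A : Matrix (Fin m) (Fin m) ℝ} {c : ℝ≥0} :
    specRad A ≤ c ↔ ∀ z ∈ eigs A, ‖z‖₊ ≤ c := by
  simp [specRad, Multiset.sup_le]

lemma schurStable_inv_smul {m : ℕ} {A : Matrix (Fin m) (Fin m) ℝ} {c : ℝ≥0}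
    (hc : specRad A < c) : SchurStable ((c : ℝ)⁻¹ • A) := by
  have hc0 : (0 : ℝ≥0) < c := lt_of_le_of_lt zero_le hc
  have hcr : (c : ℝ) ≠ 0 := by positivity
  intro w hw
  have h1 : ((c : ℝ) : ℂ) * w ∈ eigs ((c : ℝ) • (c : ℝ)⁻¹ • A) := mem_eigs_smul hcr hw
  rw [smul_smul, mul_inv_cancel₀ hcr, one_smul] at h1
  have h2 : ‖((c : ℝ) : ℂ) * w‖₊ ≤ specRad A := nnnorm_le_specRad h1
  have hcn : ‖((c : ℝ) : ℂ)‖₊ = c := by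
    ext
    simp [abs_of_nonneg c.coe_nonneg]
  have h3 : ‖((c : ℝ) : ℂ) * w‖₊ = c * ‖w‖₊ := by
    rw [nnnorm_mul, hcn]
  rw [h3] at h2
  have h4 : c * ‖w‖₊ < c * 1 := by
    rw [mul_one]; exact lt_of_le_of_lt h2 hc
  have := lt_of_mul_lt_mul_left h4 zero_le
  calc ‖w‖ = (‖w‖₊ : ℝ) := rfl
  _ < ((1 : ℝ≥0) : ℝ) := by exact_mod_cast this
  _ = 1 := rfl

lemma key {m : ℕ} (L : Matrix (Fin m) (Fin m) ℝ →ₗ[ℝ] Matrix (Fin m) (Fin m) ℝ)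
    (hsub : L '' {A | SchurStable A} ⊆ {A | SchurStable A})
    (A : Matrix (Fin m) (Fin m) ℝ) : specRad (L A) ≤ specRad A := by
  refine le_of_forall_gt_imp_ge_of_dense fun c hc => ?_
  have hc0 : (0 : ℝ≥0) < c := lt_of_le_of_lt zero_le hc
  have hcr : (c : ℝ) ≠ 0 := by positivity
  have hS : SchurStable ((c : ℝ)⁻¹ • A) := schurStable_inv_smul hc
  have hLS : SchurStable ((c : ℝ)⁻¹ • L A) := by
    have : L ((c : ℝ)⁻¹ • A) ∈ {A | SchurStable A} := hsub ⟨_, hS, rfl⟩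
    rwa [_root_.map_smul] at this
  rw [specRad_le_iff]
  intro z hz
  have h1 : (((c : ℝ)⁻¹ : ℝ) : ℂ) * z ∈ eigs ((c : ℝ)⁻¹ • L A) :=
    mem_eigs_smul (inv_ne_zero hcr) hz
  have h2 : ‖(((c : ℝ)⁻¹ : ℝ) : ℂ) * z‖ < 1 := hLS _ h1
  have h3 : ‖z‖ ≤ c := by
    rw [norm_mul, Complex.norm_real, Real.norm_eq_abs, abs_inv, abs_of_nonneg c.coe_nonneg] at h2
    have := (inv_mul_lt_iff₀ (by positivity : (0:ℝ) < (c:ℝ))).mp h2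
    linarith [this]
  exact_mod_cast h3

theorem stmt13 {n : ℕ}
    (L : Matrix (Fin n) (Fin n) ℝ →ₗ[ℝ] Matrix (Fin n) (Fin n) ℝ)
    (hbij : Function.Bijective L)
    (honto : L '' {A | SchurStable A} = {A | SchurStable A}) :
    ∀ A, specRad (L A) = specRad A := by
  intro A
  set e := LinearEquiv.ofBijective L hbij with he
  have hsub : L '' {A | SchurStable A} ⊆ {A | SchurStable A} := honto.le
  have hsub' : (e.symm : Matrix (Fin n) (Fin n) ℝ →ₗ[ℝ] Matrix (Fin n) (Fin n) ℝ) ''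
      {A | SchurStable A} ⊆ {A | SchurStable A} := by
    intro x ⟨y, hy, hxy⟩
    have : y ∈ L '' {A | SchurStable A} := honto.ge hy
    obtain ⟨w, hw, hwy⟩ := this
    have : e.symm y = w := by
      apply e.injective
      rw [e.apply_symm_apply]
      exact hwy.symm
    rw [← hxy]
    simpa [this] using hw
  refine le_antisymm (key L hsub A) ?_
  have := key _ hsub' (L A)
  have heq : (e.symm : Matrix (Fin n) (Fin n) ℝ →ₗ[ℝ] Matrix (Fin n) (Fin n) ℝ) (L A) = A :=
    e.symm_apply_apply A
  rwa [heq] at this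
end

section
/- If a linear map L on M_n(ℝ) maps Schur stable matrices to Schur stable matrices, then L maps nilpotent matrices to nilpotent matrices. -/
open Polynomial Matrix NNReal

lemma eval_cp {n : ℕ} (M : Matrix (Fin n) (Fin n) ℂ) (z : ℂ) :
    M.charpoly.eval z = (z • (1 : Matrix (Fin n) (Fin n) ℂ) - M).det := by
  show (Polynomial.evalRingHom z) M.charpoly = _
  rw [Matrix.charpoly, RingHom.map_det]
  congr 1
  ext i j
  by_cases h : i = j <;>
    simp [RingHom.mapMatrix_apply, Matrix.map_apply, charmatrix_apply_eq,
      charmatrix_apply_ne, h, Matrix.one_apply, Matrix.smul_apply, Matrix.sub_apply]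

lemma mem_eigs {n : ℕ} (A : Matrix (Fin n) (Fin n) ℝ) (z : ℂ) :
    z ∈ eigs A ↔
      (z • (1 : Matrix (Fin n) (Fin n) ℂ) - A.map (algebraMap ℝ ℂ)).det = 0 := by
  rw [eigs, ← Matrix.charpoly_map,
    Polynomial.mem_roots ((A.map (algebraMap ℝ ℂ)).charpoly_monic.ne_zero),
    Polynomial.IsRoot, eval_cp]

lemma map_nilpotent {n : ℕ} {A : Matrix (Fin n) (Fin n) ℝ} (h : IsNilpotent A) :
    IsNilpotent (A.map (algebraMap ℝ ℂ)) := by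
  obtain ⟨k, hk⟩ := h
  have h2 : ((algebraMap ℝ ℂ).mapMatrix) (A ^ k) = 0 := by rw [hk]; simp
  rw [map_pow, RingHom.mapMatrix_apply] at h2
  exact ⟨k, h2⟩

lemma eigs_of_nilpotent {n : ℕ} {A : Matrix (Fin n) (Fin n) ℝ}
    (h : IsNilpotent A) : ∀ z ∈ eigs A, z = 0 := by
  intro z hz
  by_contra hne
  rw [mem_eigs] at hz
  set B := A.map (algebraMap ℝ ℂ) with hB
  have hnB : IsNilpotent (z⁻¹ • B) := (map_nilpotent h).smul z⁻¹
  have hu : IsUnit (1 - z⁻¹ • B) := hnB.isUnit_one_sub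
  have hdet : (1 - z⁻¹ • B).det ≠ 0 := by
    have := (Matrix.isUnit_iff_isUnit_det _).mp hu
    exact this.ne_zero
  have heq : z • (1 : Matrix (Fin n) (Fin n) ℂ) - B = z • (1 - z⁻¹ • B) := by
    rw [smul_sub, smul_smul, mul_inv_cancel₀ hne, one_smul]
  rw [heq, Matrix.det_smul] at hz
  exact (mul_ne_zero (pow_ne_zero _ hne) hdet) hz

lemma nilpotent_of_eigs {n : ℕ} {A : Matrix (Fin n) (Fin n) ℝ}
    (h : ∀ z ∈ eigs A, z = 0) : IsNilpotent A := by
  set B := A.map (algebraMap ℝ ℂ) with hB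
  have hmon := B.charpoly_monic
  have hsp : B.charpoly.Splits := IsAlgClosed.splits _
  have hroots : B.charpoly.roots = Multiset.replicate n 0 := by
    rw [Multiset.eq_replicate]
    constructor
    · rw [Polynomial.splits_iff_card_roots.mp hsp,
        Matrix.charpoly_natDegree_eq_dim, Fintype.card_fin]
    · intro b hb
      apply h
      rw [eigs, ← Matrix.charpoly_map]
      exact hb
  have hcp : B.charpoly = X ^ n := by
    rw [hsp.eq_prod_roots_of_monic hmon, hroots]
    simp [Multiset.map_replicate, Multiset.prod_replicate]
  have hBn : B ^ n = 0 := by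
    have := B.aeval_self_charpoly
    rwa [hcp, map_pow, Polynomial.aeval_X] at this
  refine ⟨n, ?_⟩
  ext i j
  have hmap : (A ^ n).map (algebraMap ℝ ℂ) = 0 := by
    have := map_pow ((algebraMap ℝ ℂ).mapMatrix) A n
    rw [RingHom.mapMatrix_apply] at this
    rw [this]
    simpa [RingHom.mapMatrix_apply, hB] using hBn
  have hij := congrFun (congrFun hmap i) j
  simp only [Matrix.map_apply, Matrix.zero_apply] at hij
  have := (algebraMap ℝ ℂ).injective (hij.trans (map_zero (algebraMap ℝ ℂ)).symm)
  simpa using this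

lemma map_smul_complex {n : ℕ} (A : Matrix (Fin n) (Fin n) ℝ) (c : ℝ) :
    (c • A).map (algebraMap ℝ ℂ) = (c : ℂ) • A.map (algebraMap ℝ ℂ) := by
  ext i j
  simp [Matrix.map_apply, Matrix.smul_apply]

lemma eigs_smul_mem {n : ℕ} (A : Matrix (Fin n) (Fin n) ℝ) (c : ℝ) (z : ℂ)
    (hz : z ∈ eigs A) : (c : ℂ) * z ∈ eigs (c • A) := by
  rw [mem_eigs] at hz ⊢
  rw [map_smul_complex]
  have heq : ((c : ℂ) * z) • (1 : Matrix (Fin n) (Fin n) ℂ) -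
      (c : ℂ) • A.map (algebraMap ℝ ℂ) =
      (c : ℂ) • (z • (1 : Matrix (Fin n) (Fin n) ℂ) - A.map (algebraMap ℝ ℂ)) := by
    rw [smul_sub, smul_smul]
  rw [heq, Matrix.det_smul, hz, mul_zero]

theorem stmt14 {n : ℕ}
    (L : Matrix (Fin n) (Fin n) ℝ →ₗ[ℝ] Matrix (Fin n) (Fin n) ℝ)
    (hL : ∀ A, SchurStable A → SchurStable (L A)) :
    ∀ N : Matrix (Fin n) (Fin n) ℝ, IsNilpotent N → IsNilpotent (L N) := by
  intro N hN
  apply nilpotent_of_eigs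
  intro z hz
  by_contra hne
  have hznorm : (0 : ℝ) < ‖z‖ := norm_pos_iff.mpr hne
  set c : ℝ := 2 / ‖z‖ with hc
  have hcpos : 0 < c := by positivity
  have h1 : SchurStable (c • N) := by
    intro w hw
    rw [eigs_of_nilpotent (hN.smul c) w hw]
    simp
  have h2 := hL _ h1
  rw [LinearMap.map_smul] at h2
  have h3 := h2 _ (eigs_smul_mem (L N) c z hz)
  rw [norm_mul, Complex.norm_real, Real.norm_eq_abs, abs_of_pos hcpos, hc,
    div_mul_cancel₀ _ hznorm.ne'] at h3
  norm_num at h3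
end
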